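/- arXiv:1803.08783 — 7 statements merged into one kernel-verified Lean document; each statement's English description precedes it below -/
import Mathlib

section
/- Let (φ̄, ω̄_g, ū) be an equilibrium of the open-loop power-network differential–algebraic system, i.e. ω̄_g = 𝟙ω* for a constant ω* ∈ ℝ, 0 = −D𝟙ω* − E_g∇U(φ̄) + p_g* + ū, and 0 = −E_ℓ∇U(φ̄) + p_ℓ*. Let φ_g, θ_ℓ, ω_g, u be differentiable functions of time on an interval, set φ_ℓ := E_ℓᵀθ_ℓ and φ := φ_g + φ_ℓ, and suppose they satisfy φ̇_g = E_gᵀω_g, M ω̇_g = −Dω_g − E_g∇U(φ) + p_g* + u, and the algebraic constraint 0 = −E_ℓ∇U(φ) + p_ℓ*. Then along this solution the storage function S(φ, ω_g) := ½(ω_g − ω̄_g)ᵀM(ω_g − ω̄_g) + U(φ) − U(φ̄) − (φ − φ̄)ᵀ∇U(φ̄) satisfies, at every time, dS/dt = −(ω_g − ω̄_g)ᵀ D (ω_g − ω̄_g) + (ω_g − ω̄_g)ᵀ(u − ū). In particular the system is output strictly incrementally passive from u to ω_g with respect to this equilibrium. -/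
/-!
The storage is the kinetic energy of the frequency deviation plus the Bregman divergence of `U`
about `φ̄`, so its rate is `(ω_g − ω̄_g)ᵀ M ω̇_g + (∇U(φ) − ∇U(φ̄))ᵀ φ̇` with
`φ̇ = E_gᵀ ω_g + E_ℓᵀ θ̇_ℓ`. The `θ̇_ℓ` part vanishes since `E_ℓ ∇U(φ) = p_ℓ* = E_ℓ ∇U(φ̄)`.
Subtracting the equilibrium from the swing equation, the `ω_g` part cancels up to
`ω* 𝟙ᵀ E_g (∇U(φ) − ∇U(φ̄)) = −ω* 𝟙ᵀ E_ℓ (∇U(φ) − ∇U(φ̄)) = 0`.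
-/

open Matrix

section Calculus

variable {ι κ : Type*} [Fintype ι] [Fintype κ] {t : ℝ}

theorem HasDerivAt.matrix_mulVec (A : Matrix ι κ ℝ) {f : ℝ → κ → ℝ} {f' : κ → ℝ}
    (hf : HasDerivAt f f' t) : HasDerivAt (fun s => A *ᵥ f s) (A *ᵥ f') t :=
  (LinearMap.toContinuousLinearMap (mulVecLin A)).hasFDerivAt.comp_hasDerivAt t hf

theorem HasDerivAt.dotProduct_const {f : ℝ → ι → ℝ} {f' : ι → ℝ} (hf : HasDerivAt f f' t)
    (v : ι → ℝ) : HasDerivAt (fun s => f s ⬝ᵥ v) (f' ⬝ᵥ v) t :=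
  HasDerivAt.fun_sum fun i _ => (hasDerivAt_pi.mp hf i).mul_const (v i)

theorem hasDerivAt_half_weighted_sq_dist (M : ι → ℝ) (c : ℝ) {ω : ℝ → ι → ℝ} {ω' : ι → ℝ}
    (hω : HasDerivAt ω ω' t) :
    HasDerivAt (fun s => (1 / 2) * ∑ i, M i * (ω s i - c) ^ 2)
      (∑ i, (ω t i - c) * (M i * ω' i)) t := by
  have h := (HasDerivAt.fun_sum (u := Finset.univ) fun i _ =>
    (((hasDerivAt_pi.mp hω i).sub_const c).fun_pow 2).const_mul (M i)).const_mul (1 / 2 : ℝ)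
  refine h.congr_deriv ?_
  rw [Finset.mul_sum]
  refine Finset.sum_congr rfl fun i _ => ?_
  push_cast
  ring

theorem hasDerivAt_neg_sum_cos_potential (R : Matrix ι κ ℝ) (γ : κ → ℝ) {φ : ℝ → ι → ℝ}
    {φ' : ι → ℝ} (hφ : HasDerivAt φ φ' t) :
    HasDerivAt (fun s => -∑ k, γ k * Real.cos ((Rᵀ *ᵥ φ s) k))
      ((R *ᵥ fun k => γ k * Real.sin ((Rᵀ *ᵥ φ t) k)) ⬝ᵥ φ') t := by
  have hθ := hasDerivAt_pi.mp (hφ.matrix_mulVec Rᵀ)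
  refine (HasDerivAt.fun_sum (u := Finset.univ) fun k _ =>
    ((hθ k).cos).const_mul (γ k)).fun_neg.congr_deriv ?_
  rw [dotProduct_comm, dotProduct_mulVec, ← mulVec_transpose, dotProduct_comm, dotProduct,
    ← Finset.sum_neg_distrib]
  exact Finset.sum_congr rfl fun k _ => by ring

end Calculus

section Algebra

variable {ι G L : Type*} [Fintype ι] [Fintype G] [Fintype L]
  {Eg : Matrix G ι ℝ} {El : Matrix L ι ℝ}

theorem sum_mulVec_eq_zero_of_mulVec_eq_zero (hE : ∀ j, ∑ i, Eg i j + ∑ i, El i j = 0)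
    {x : ι → ℝ} (hx : El *ᵥ x = 0) : ∑ i, (Eg *ᵥ x) i = 0 := by
  have hcols : 1 ᵥ* Eg = -(1 ᵥ* El) := by
    funext j
    simpa [vecMul, dotProduct, eq_neg_iff_add_eq_zero] using hE j
  calc ∑ i, (Eg *ᵥ x) i = 1 ⬝ᵥ (Eg *ᵥ x) := by simp [dotProduct]
    _ = -(1 ⬝ᵥ (El *ᵥ x)) := by rw [dotProduct_mulVec, hcols, neg_dotProduct, ← dotProduct_mulVec]
    _ = 0 := by rw [hx, dotProduct_zero, neg_zero]

theorem sub_dotProduct_transpose_mulVec_add (g ge : ι → ℝ) (w : G → ℝ) (θ' : L → ℝ)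
    (hEl : El *ᵥ g = El *ᵥ ge) :
    g ⬝ᵥ (Egᵀ *ᵥ w + Elᵀ *ᵥ θ') - (Egᵀ *ᵥ w + Elᵀ *ᵥ θ') ⬝ᵥ ge = w ⬝ᵥ (Eg *ᵥ (g - ge)) := by
  rw [dotProduct_comm _ ge, ← sub_dotProduct, dotProduct_add, dotProduct_mulVec, dotProduct_mulVec,
    vecMul_transpose, vecMul_transpose, mulVec_sub, mulVec_sub, hEl, sub_self, zero_dotProduct,
    add_zero, dotProduct_comm]

theorem storage_rate_eq_supply_rate (hE : ∀ j, ∑ i, Eg i j + ∑ i, El i j = 0)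
    {M D p u ue w ω' : G → ℝ} {ωs : ℝ} {g ge : ι → ℝ} (θ' : L → ℝ)
    (hω' : ∀ i, M i * ω' i = -(D i * w i) - (Eg *ᵥ g) i + p i + u i)
    (heq : ∀ i, 0 = -(D i * ωs) - (Eg *ᵥ ge) i + p i + ue i)
    (hEl : El *ᵥ g = El *ᵥ ge) :
    ∑ i, (w i - ωs) * (M i * ω' i) + g ⬝ᵥ (Egᵀ *ᵥ w + Elᵀ *ᵥ θ') - (Egᵀ *ᵥ w + Elᵀ *ᵥ θ') ⬝ᵥ ge
      = -(∑ i, D i * (w i - ωs) ^ 2) + ∑ i, (w i - ωs) * (u i - ue i) := by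
  have hnet : ∑ i, (Eg *ᵥ (g - ge)) i = 0 :=
    sum_mulVec_eq_zero_of_mulVec_eq_zero hE (by rw [mulVec_sub, hEl, sub_self])
  have hbus : ∀ i, (w i - ωs) * (M i * ω' i) + w i * (Eg *ᵥ (g - ge)) i
      = -(D i * (w i - ωs) ^ 2) + (w i - ωs) * (u i - ue i) + ωs * (Eg *ᵥ (g - ge)) i := by
    intro i
    rw [hω', mulVec_sub, Pi.sub_apply]
    linear_combination (ωs - w i) * heq i
  rw [add_sub_assoc, sub_dotProduct_transpose_mulVec_add g ge w θ' hEl, dotProduct,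
    ← Finset.sum_add_distrib, Finset.sum_congr rfl fun i _ => hbus i, Finset.sum_add_distrib,
    Finset.sum_add_distrib, ← Finset.mul_sum, hnet, mul_zero, add_zero, Finset.sum_neg_distrib]

end Algebra

theorem open_loop_dae_output_strict_incremental_passivity_general
    {n m ng nl : ℕ}
    (Rφ : Matrix (Fin n) (Fin m) ℝ) (γ : Fin m → ℝ)
    (Eg : Matrix (Fin ng) (Fin n) ℝ) (El : Matrix (Fin nl) (Fin n) ℝ)
    (M D : Fin ng → ℝ) (pgs : Fin ng → ℝ) (pls : Fin nl → ℝ)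
    (hM : ∀ i, 0 < M i)
    (hE1 : ∀ j : Fin n, (∑ i, Eg i j) + (∑ i, El i j) = 0)
    -- the gradient  ∇U(φ) = R_φ Γ sin(R_φᵀ φ)
    (gradU : (Fin n → ℝ) → (Fin n → ℝ))
    (hgradU : ∀ φ : Fin n → ℝ, gradU φ = Rφ *ᵥ fun kk => γ kk * Real.sin ((Rφᵀ *ᵥ φ) kk))
    -- equilibrium (φ̄, 𝟙ω*, ū)
    (ωs : ℝ) (φe : Fin n → ℝ) (ue : Fin ng → ℝ)
    (heq1 : ∀ i, 0 = -(D i * ωs) - (Eg *ᵥ gradU φe) i + pgs i + ue i)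
    (heq2 : ∀ j, 0 = -(El *ᵥ gradU φe) j + pls j)
    -- a solution on an interval I
    (I : Set ℝ)
    (φg : ℝ → Fin n → ℝ) (θl : ℝ → Fin nl → ℝ) (ωg : ℝ → Fin ng → ℝ)
    (u : ℝ → Fin ng → ℝ) (θl' : ℝ → Fin nl → ℝ)
    (hφg : ∀ t ∈ I, HasDerivAt φg (Egᵀ *ᵥ ωg t) t)
    (hθl : ∀ t ∈ I, HasDerivAt θl (θl' t) t)
    (hωg : ∀ t ∈ I, HasDerivAt ωg
      (fun i => (-(D i * ωg t i) - (Eg *ᵥ gradU (φg t + Elᵀ *ᵥ θl t)) i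
          + pgs i + u t i) / M i) t)
    (halg : ∀ t ∈ I, El *ᵥ gradU (φg t + Elᵀ *ᵥ θl t) = pls) :
    ∀ t ∈ I,
      HasDerivAt
        (fun s =>
          (1 / 2) * ∑ i, M i * (ωg s i - ωs) ^ 2
            + (-∑ kk, γ kk * Real.cos ((Rφᵀ *ᵥ (φg s + Elᵀ *ᵥ θl s)) kk))
            - (-∑ kk, γ kk * Real.cos ((Rφᵀ *ᵥ φe) kk))
            - ((φg s + Elᵀ *ᵥ θl s) - φe) ⬝ᵥ gradU φe)
        (-(∑ i, D i * (ωg t i - ωs) ^ 2) + ∑ i, (ωg t i - ωs) * (u t i - ue i)) t := by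
  intro t ht
  have hφ : HasDerivAt (fun s => φg s + Elᵀ *ᵥ θl s) (Egᵀ *ᵥ ωg t + Elᵀ *ᵥ θl' t) t :=
    (hφg t ht).add ((hθl t ht).matrix_mulVec Elᵀ)
  have hEl : El *ᵥ gradU (φg t + Elᵀ *ᵥ θl t) = El *ᵥ gradU φe := by
    rw [halg t ht]
    funext j
    linarith [heq2 j]
  refine ((((hasDerivAt_half_weighted_sq_dist M ωs (hωg t ht)).fun_add
    (hasDerivAt_neg_sum_cos_potential Rφ γ hφ)).sub_const _).fun_sub
    ((hφ.sub_const φe).dotProduct_const (gradU φe))).congr_deriv ?_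
  rw [← hgradU]
  exact storage_rate_eq_supply_rate hE1 (θl' t) (fun i => mul_div_cancel₀ _ (hM i).ne') heq1 hEl

/-- output strict incremental passivity of the open-loop power-network
DAE. Along any solution `(φ_g, θ_ℓ, ω_g, u)` of
`φ̇_g = E_gᵀω_g`, `Mω̇_g = −Dω_g − E_g∇U(φ) + p_g* + u`, `0 = −E_ℓ∇U(φ) + p_ℓ*`
(with `φ = φ_g + E_ℓᵀθ_ℓ`), and for any equilibrium `(φ̄, 𝟙ω*, ū)`, the storage
`S = ½(ω_g − ω̄_g)ᵀM(ω_g − ω̄_g) + U(φ) − U(φ̄) − (φ − φ̄)ᵀ∇U(φ̄)` satisfies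
`dS/dt = −(ω_g − ω̄_g)ᵀD(ω_g − ω̄_g) + (ω_g − ω̄_g)ᵀ(u − ū)`. -/
theorem open_loop_dae_output_strict_incremental_passivity
    {n m ng nl : ℕ}
    (Rφ : Matrix (Fin n) (Fin m) ℝ) (γ : Fin m → ℝ)
    (Eg : Matrix (Fin ng) (Fin n) ℝ) (El : Matrix (Fin nl) (Fin n) ℝ)
    (M D : Fin ng → ℝ) (pgs : Fin ng → ℝ) (pls : Fin nl → ℝ)
    (hγ : ∀ k, 0 < γ k) (hM : ∀ i, 0 < M i) (hD : ∀ i, 0 < D i)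
    (hE1 : ∀ j : Fin n, (∑ i, Eg i j) + (∑ i, El i j) = 0)
    -- the gradient  ∇U(φ) = R_φ Γ sin(R_φᵀ φ)
    (gradU : (Fin n → ℝ) → (Fin n → ℝ))
    (hgradU : ∀ φ : Fin n → ℝ, gradU φ = Rφ *ᵥ fun kk => γ kk * Real.sin ((Rφᵀ *ᵥ φ) kk))
    -- equilibrium (φ̄, 𝟙ω*, ū)
    (ωs : ℝ) (φe : Fin n → ℝ) (ue : Fin ng → ℝ)
    (heq1 : ∀ i, 0 = -(D i * ωs) - (Eg *ᵥ gradU φe) i + pgs i + ue i)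
    (heq2 : ∀ j, 0 = -(El *ᵥ gradU φe) j + pls j)
    -- a solution on an interval I
    (I : Set ℝ)
    (φg : ℝ → Fin n → ℝ) (θl : ℝ → Fin nl → ℝ) (ωg : ℝ → Fin ng → ℝ)
    (u : ℝ → Fin ng → ℝ) (θl' : ℝ → Fin nl → ℝ)
    (hφg : ∀ t ∈ I, HasDerivAt φg (Egᵀ *ᵥ ωg t) t)
    (hθl : ∀ t ∈ I, HasDerivAt θl (θl' t) t)
    (hu : ∀ t ∈ I, DifferentiableAt ℝ u t)
    (hωg : ∀ t ∈ I, HasDerivAt ωg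
      (fun i => (-(D i * ωg t i) - (Eg *ᵥ gradU (φg t + Elᵀ *ᵥ θl t)) i
          + pgs i + u t i) / M i) t)
    (halg : ∀ t ∈ I, El *ᵥ gradU (φg t + Elᵀ *ᵥ θl t) = pls) :
    ∀ t ∈ I,
      HasDerivAt
        (fun s =>
          (1 / 2) * ∑ i, M i * (ωg s i - ωs) ^ 2
            + (-∑ kk, γ kk * Real.cos ((Rφᵀ *ᵥ (φg s + Elᵀ *ᵥ θl s)) kk))
            - (-∑ kk, γ kk * Real.cos ((Rφᵀ *ᵥ φe) kk))
            - ((φg s + Elᵀ *ᵥ θl s) - φe) ⬝ᵥ gradU φe)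
        (-(∑ i, D i * (ωg t i - ωs) ^ 2) + ∑ i, (ωg t i - ωs) * (u t i - ue i)) t :=
  open_loop_dae_output_strict_incremental_passivity_general Rφ γ Eg El M D pgs pls hM hE1 gradU
    hgradU ωs φe ue heq1 heq2 I φg θl ωg u θl' hφg hθl hωg halg
end

section
/- Let A ∈ ℝ^{k×k} be invertible, B ∈ ℝ^{k×1}, C ∈ ℝ^{1×k}, M > 0, D ∈ ℝ, and suppose the pair (A, −B) is controllable, i.e. for every λ ∈ ℂ the k×(k+1) matrix [A − λI −B] has rank k. Define 𝒜 ∈ ℝ^{(k+2)×(k+2)} and ℬ ∈ ℝ^{(k+2)×1} by 𝒜 = [[0, 1, 0],[0, −M^{-1}D, M^{-1}C],[0, −B, A]] and ℬ = [0; M^{-1}; 0]. Then the pair (𝒜, ℬ) is controllable: for every λ ∈ ℂ the matrix [𝒜 − λI ℬ] has rank k+2. -/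
/-!
The PBH matrix `[𝒜 - λ, ℬ]` has full row rank iff it has no nonzero left null vector. For a left
null vector `(a, b, w)`, the input column forces `b = 0`, after which the `ξ` columns say
`w (A - λ) = 0` and the `ω` column says `a = w B`. For `λ = 0` invertibility of `A` gives `w = 0`;
for `λ ≠ 0` the `θ` column gives `λ a = 0`, hence `a = 0` and `w [A - λ, -B] = 0`, so `w = 0` by
controllability of `(A, -B)`.
-/

open Matrix

theorem Matrix.rank_eq_card_iff_vecMul_eq_zero {K m n : Type*} [Field K] [Fintype m] [Fintype n]
    (M : Matrix m n K) : M.rank = Fintype.card m ↔ ∀ v : m → K, v ᵥ* M = 0 → v = 0 := by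
  change _ ↔ ∀ v, M.vecMulLinear v = 0 → v = 0
  rw [← injective_iff_map_eq_zero, coe_vecMulLinear, vecMul_injective_iff,
    linearIndependent_iff_card_eq_finrank_span, rank_eq_finrank_span_row, eq_comm, Set.finrank]

theorem Matrix.of_const_eq_smul_one {n α : Type*} [Unique n] [DecidableEq n] [Semiring α] (c : α) :
    (of fun _ _ => c : Matrix n n α) = c • 1 := by
  ext i j
  simp [Subsingleton.elim i j]

section BusRealization

variable {K ι : Type*} [Field K] [Fintype ι] [DecidableEq ι]

def pbhMatrix {n p : Type*} [DecidableEq n] (A : Matrix n n K) (B : Matrix n p K) (lam : K) :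
    Matrix n (n ⊕ p) K :=
  fromCols (A - lam • 1) B

/-- In the state `(θ, ω, ξ)` this is `θ' = ω`, `ω' = d ω + F ξ + m u`, `ξ' = N ω + A ξ` together
with `busInputMatrix m`; the theorem takes `N = -B`, `F = M⁻¹ C`, `d = -M⁻¹ D`, `m = M⁻¹`. -/
def busStateMatrix (A : Matrix ι ι K) (N : Matrix ι (Fin 1) K) (F : Matrix (Fin 1) ι K) (d : K) :
    Matrix (Fin 1 ⊕ (Fin 1 ⊕ ι)) (Fin 1 ⊕ (Fin 1 ⊕ ι)) K :=
  fromBlocks 0 (fromCols (of fun _ _ => 1) 0) 0 (fromBlocks (of fun _ _ => d) F N A)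

def busInputMatrix (m : K) : Matrix (Fin 1 ⊕ (Fin 1 ⊕ ι)) (Fin 1) K :=
  fromRows 0 (fromRows (of fun _ _ => m) 0)

variable {A : Matrix ι ι K} {N : Matrix ι (Fin 1) K} {F : Matrix (Fin 1) ι K} {d m lam : K}

theorem pbhMatrix_busStateMatrix_left_kernel {a b : Fin 1 → K} {w : ι → K} (hm : m ≠ 0)
    (hv : Sum.elim a (Sum.elim b w) ᵥ*
      pbhMatrix (busStateMatrix A N F d) (busInputMatrix m) lam = 0) :
    b = 0 ∧ lam • a = 0 ∧ a + w ᵥ* N = 0 ∧ w ᵥ* (A - lam • 1) = 0 := by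
  rw [pbhMatrix, busStateMatrix, busInputMatrix, ← fromBlocks_one, ← fromBlocks_one,
    fromBlocks_smul, fromBlocks_smul, sub_eq_add_neg, fromBlocks_neg, fromBlocks_neg,
    fromBlocks_add, fromBlocks_add, of_const_eq_smul_one, of_const_eq_smul_one,
    of_const_eq_smul_one] at hv
  simp only [vecMul_fromCols, vecMul_fromBlocks, vecMul_fromRows, Sum.elim_comp_inl,
    Sum.elim_comp_inr, vecMul_zero, add_zero, zero_add, vecMul_add, ← Sum.elim_zero_zero,
    Sum.elim_eq_iff, smul_zero, neg_zero, vecMul_neg, vecMul_smul, vecMul_one, ← Sum.elim_add_add,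
    one_smul, smul_eq_zero, hm, false_or] at hv
  obtain ⟨⟨hθ, hω, hξ⟩, rfl⟩ := hv
  simp only [smul_zero, neg_zero, zero_add, zero_vecMul, neg_eq_zero] at hω hξ hθ
  refine ⟨rfl, hθ, hω, ?_⟩
  rw [vecMul_sub, vecMul_smul, vecMul_one, ← hξ, sub_eq_add_neg]

theorem rank_pbhMatrix_busStateMatrix (hm : m ≠ 0) (hA : A.det ≠ 0)
    (hctrb : (pbhMatrix A N lam).rank = Fintype.card ι) :
    (pbhMatrix (busStateMatrix A N F d) (busInputMatrix m) lam).rank = Fintype.card ι + 2 := by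
  have hcard : Fintype.card (Fin 1 ⊕ (Fin 1 ⊕ ι)) = Fintype.card ι + 2 := by
    simp only [Fintype.card_sum, Fintype.card_fin]
    omega
  rw [← hcard, rank_eq_card_iff_vecMul_eq_zero]
  intro v hv
  obtain ⟨a, v, rfl⟩ : ∃ a v', v = Sum.elim a v' := ⟨_, _, (Sum.elim_comp_inl_inr v).symm⟩
  obtain ⟨b, w, rfl⟩ : ∃ b w, v = Sum.elim b w := ⟨_, _, (Sum.elim_comp_inl_inr v).symm⟩
  obtain ⟨rfl, hθ, hω, hξ⟩ := pbhMatrix_busStateMatrix_left_kernel hm hv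
  have hw : w = 0 := by
    by_cases hlam : lam = 0
    · rw [hlam, zero_smul, sub_zero] at hξ
      exact eq_zero_of_vecMul_eq_zero hA hξ
    · rw [(smul_eq_zero.1 hθ).resolve_left hlam, zero_add] at hω
      refine (rank_eq_card_iff_vecMul_eq_zero _).1 hctrb w ?_
      rw [pbhMatrix, vecMul_fromCols, hξ, hω, Sum.elim_zero_zero]
  subst hw
  rw [zero_vecMul, add_zero] at hω
  rw [hω, Sum.elim_zero_zero, Sum.elim_zero_zero]

end BusRealization

/-- PBH controllability of the bus realization. If `A ∈ ℝ^{k×k}` is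
invertible, `M > 0`, and the pair `(A, −B)` is controllable in the PBH sense, then the
pair `(𝒜, ℬ)` with `𝒜 = [[0,1,0],[0,−M⁻¹D,M⁻¹C],[0,−B,A]]` and `ℬ = [0; M⁻¹; 0]` is
controllable: `[𝒜 − λI  ℬ]` has rank `k+2` for every `λ ∈ ℂ`. -/
theorem pbh_controllability_bus_realization {k : ℕ}
    (A : Matrix (Fin k) (Fin k) ℝ) (B : Matrix (Fin k) (Fin 1) ℝ)
    (C : Matrix (Fin 1) (Fin k) ℝ) (M D : ℝ) (hM : 0 < M) (hA : IsUnit A.det)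
    (hctrb : ∀ lam : ℂ,
      (Matrix.fromCols (A.map (fun x : ℝ => (x : ℂ)) - lam • 1)
        ((-B).map (fun x : ℝ => (x : ℂ)))).rank = k) :
    ∀ lam : ℂ,
      (Matrix.fromCols
        ((Matrix.fromBlocks (0 : Matrix (Fin 1) (Fin 1) ℝ)
            (Matrix.fromCols (Matrix.of fun _ _ => (1 : ℝ)) (0 : Matrix (Fin 1) (Fin k) ℝ))
            (0 : Matrix (Fin 1 ⊕ Fin k) (Fin 1) ℝ)
            (Matrix.fromBlocks (Matrix.of fun _ _ => -(M⁻¹ * D)) (M⁻¹ • C) (-B) A)).map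
              (fun x : ℝ => (x : ℂ))
          - lam • 1)
        ((Matrix.fromRows (0 : Matrix (Fin 1) (Fin 1) ℝ)
            (Matrix.fromRows (Matrix.of fun _ _ => M⁻¹) (0 : Matrix (Fin k) (Fin 1) ℝ))).map
              (fun x : ℝ => (x : ℂ)))).rank = k + 2 := by
  intro lam
  have hm : ((M⁻¹ : ℝ) : ℂ) ≠ 0 := by exact_mod_cast inv_ne_zero hM.ne'
  have hAℂ : (A.map (fun x : ℝ => (x : ℂ))).det ≠ 0 := by
    rw [show A.map (fun x : ℝ => (x : ℂ)) = Complex.ofRealHom.mapMatrix A from rfl,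
      ← RingHom.map_det, Complex.ofRealHom_eq_coe]
    exact_mod_cast hA.ne_zero
  have key := rank_pbhMatrix_busStateMatrix (F := (M⁻¹ • C).map (fun x : ℝ => (x : ℂ)))
    (d := ((-(M⁻¹ * D) : ℝ) : ℂ)) hm hAℂ ((hctrb lam).trans (Fintype.card_fin k).symm)
  rw [Fintype.card_fin] at key
  simp only [fromBlocks_map, fromCols_map, fromRows_map, Matrix.map_zero _ Complex.ofReal_zero]
  exact key
end

section
/- Let A ∈ ℝ^{k×k} be invertible, B ∈ ℝ^{k×1}, C ∈ ℝ^{1×k}, M > 0, D ∈ ℝ, and ρ > 0. Suppose the pair (C, A) is observable, i.e. for every λ ∈ ℂ the (k+1)×k matrix [A − λI; C] has rank k, and suppose −ρ^{-1} is not an eigenvalue of the matrix [[−M^{-1}D, M^{-1}C],[−B, A]]. Define 𝒜 = [[0, 1, 0],[0, −M^{-1}D, M^{-1}C],[0, −B, A]] ∈ ℝ^{(k+2)×(k+2)} and 𝒞 = [1, ρ, 0] ∈ ℝ^{1×(k+2)}. Then the pair (𝒞, 𝒜) is observable: for every λ ∈ ℂ the matrix [𝒜 − λI; 𝒞] has rank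 k+2. -/
/-!
Write a kernel vector of `[𝒜 − λI; 𝒞]` as `(θ, x)` with `x = (ω, ξ)`. The first row and the
output give `ω = λθ` and `θ = −ρω`, hence `(1 + ρλ)θ = 0`. If `1 + ρλ ≠ 0` then `θ = ω = 0`, and
the remaining rows say `Cξ = 0` and `Aξ = λξ`, so `ξ = 0` by observability of `(C, A)`. If
`1 + ρλ = 0` then `λ = −ρ⁻¹` and `x` lies in the kernel of `A₀ + ρ⁻¹I`, where `A₀` is the
lower-right block, so `x = 0` because `−ρ⁻¹` is not an eigenvalue of `A₀`; then `θ = −ρω = 0`.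
-/

open Matrix

theorem Sum.smul_elim {α β R M : Type*} [SMul R M] (c : R) (f : α → M) (g : β → M) :
    c • Sum.elim f g = Sum.elim (c • f) (c • g) := by
  ext (i | i) <;> rfl

theorem Sum.elim_eq_zero_iff {α β M : Type*} [Zero M] (f : α → M) (g : β → M) :
    Sum.elim f g = 0 ↔ f = 0 ∧ g = 0 := by
  rw [← Sum.elim_zero_zero, Sum.elim_eq_iff]

theorem RingHom.det_map_add_smul_one_ne_zero {K L n : Type*} [Field K] [Field L] [Fintype n]
    [DecidableEq n] (f : K →+* L) {A : Matrix n n K} {c : K} (h : (A + c • 1).det ≠ 0) :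
    (A.map f + f c • 1).det ≠ 0 := by
  have hmap : (A + c • 1).map f = A.map f + f c • 1 := by
    ext i j; by_cases hij : i = j <;> simp [one_apply, hij]
  rwa [← hmap, ← RingHom.mapMatrix_apply, ← RingHom.map_det, map_ne_zero]

namespace Matrix

variable {K m n p q : Type*} [Field K] [Fintype n]

theorem rank_eq_card_width_iff [Fintype m] (P : Matrix m n K) :
    P.rank = Fintype.card n ↔ ∀ v, P *ᵥ v = 0 → v = 0 := by
  rw [← ker_mulVecLin_eq_bot_iff, ← Submodule.finrank_eq_zero, rank,
    ← Module.finrank_fintype_fun_eq_card K, ← P.mulVecLin.finrank_range_add_finrank_ker]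
  omega

def ObservableAt (C : Matrix m n K) (A : Matrix n n K) (lam : K) : Prop :=
  ∀ v, A *ᵥ v = lam • v → C *ᵥ v = 0 → v = 0

theorem rank_fromRows_sub_smul_one_eq_card_iff [DecidableEq n] [Fintype m] (C : Matrix m n K)
    (A : Matrix n n K) (lam : K) :
    (fromRows (A - lam • 1) C).rank = Fintype.card n ↔ ObservableAt C A lam := by
  rw [rank_eq_card_width_iff]
  refine forall_congr' fun v => ?_
  rw [fromRows_mulVec, Sum.elim_eq_zero_iff, sub_mulVec, smul_mulVec, one_mulVec, sub_eq_zero,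
    and_imp]

theorem ObservableAt.smul {C : Matrix m n K} {A : Matrix n n K} {lam : K}
    (h : ObservableAt C A lam) {c : K} (hc : c ≠ 0) : ObservableAt (c • C) A lam := by
  intro v hA hC
  rw [smul_mulVec, smul_eq_zero] at hC
  exact h v hA (hC.resolve_left hc)

theorem ObservableAt.fromCols_one_zero_fromBlocks [Fintype q] [DecidableEq q]
    {C : Matrix q n K} {A : Matrix n n K} {lam : K} (h : ObservableAt C A lam)
    (a : Matrix q q K) (b : Matrix n q K) :
    ObservableAt (fromCols 1 (0 : Matrix q n K)) (fromBlocks a C b A) lam := by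
  intro v hA hC
  obtain ⟨w, ξ, rfl⟩ : ∃ w ξ, v = Sum.elim w ξ := ⟨_, _, (Sum.elim_comp_inl_inr v).symm⟩
  simp only [fromCols_mulVec, Sum.elim_comp_inl, Sum.elim_comp_inr, one_mulVec, zero_mulVec,
    add_zero] at hC
  subst hC
  simp only [fromBlocks_mulVec, Sum.elim_comp_inl, Sum.elim_comp_inr, mulVec_zero, zero_add,
    Sum.smul_elim, smul_zero, Sum.elim_eq_iff] at hA
  rw [h ξ hA.2 hA.1, Sum.elim_zero_zero]

theorem ObservableAt.fromCols_one_smul_fromBlocks_zero [Fintype p] [DecidableEq p]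
    [Fintype q] [DecidableEq q] {E : Matrix q p K} {A : Matrix p p K} {lam : K}
    (h : ObservableAt E A lam) {ρ : K} (hdet : (A + ρ⁻¹ • 1).det ≠ 0) :
    ObservableAt (fromCols 1 (ρ • E)) (fromBlocks 0 E 0 A) lam := by
  intro v hA hC
  obtain ⟨θ, x, rfl⟩ : ∃ θ x, v = Sum.elim θ x := ⟨_, _, (Sum.elim_comp_inl_inr v).symm⟩
  simp only [fromBlocks_mulVec, Sum.elim_comp_inl, Sum.elim_comp_inr, zero_mulVec, zero_add,
    Sum.smul_elim, Sum.elim_eq_iff] at hA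
  obtain ⟨hE, hAx⟩ := hA
  simp only [fromCols_mulVec, Sum.elim_comp_inl, Sum.elim_comp_inr, one_mulVec,
    smul_mulVec] at hC
  by_cases hres : 1 + ρ * lam = 0
  · have hx : x = 0 := by
      refine eq_zero_of_mulVec_eq_zero hdet ?_
      rw [add_mulVec, hAx, smul_mulVec, one_mulVec, ← add_smul]
      have hρ : ρ ≠ 0 := by rintro rfl; simp at hres
      rw [show lam + ρ⁻¹ = ρ⁻¹ * (1 + ρ * lam) by field_simp; ring, hres, mul_zero, zero_smul]
    rw [hx, mulVec_zero, smul_zero, add_zero] at hC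
    rw [hC, hx, Sum.elim_zero_zero]
  · have hθ : (1 + ρ * lam) • θ = 0 := by rwa [add_smul, one_smul, ← smul_smul, ← hE]
    obtain rfl : θ = 0 := (smul_eq_zero.mp hθ).resolve_left hres
    rw [smul_zero] at hE
    rw [h x hAx hE, Sum.elim_zero_zero]

end Matrix

theorem pbh_observability_bus_realization_general {k : ℕ}
    (A : Matrix (Fin k) (Fin k) ℝ) (B : Matrix (Fin k) (Fin 1) ℝ)
    (C : Matrix (Fin 1) (Fin k) ℝ) (M D ρ : ℝ) (hM : 0 < M)
    (hobs : ∀ lam : ℂ,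
      (Matrix.fromRows (A.map (fun x : ℝ => (x : ℂ)) - lam • 1)
        (C.map (fun x : ℝ => (x : ℂ)))).rank = k)
    (hnotEig :
      ((Matrix.fromBlocks (Matrix.of fun _ _ => -(M⁻¹ * D)) (M⁻¹ • C) (-B) A)
          + ρ⁻¹ • (1 : Matrix (Fin 1 ⊕ Fin k) (Fin 1 ⊕ Fin k) ℝ)).det ≠ 0) :
    ∀ lam : ℂ,
      (Matrix.fromRows
        ((Matrix.fromBlocks (0 : Matrix (Fin 1) (Fin 1) ℝ)
            (Matrix.fromCols (Matrix.of fun _ _ => (1 : ℝ)) (0 : Matrix (Fin 1) (Fin k) ℝ))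
            (0 : Matrix (Fin 1 ⊕ Fin k) (Fin 1) ℝ)
            (Matrix.fromBlocks (Matrix.of fun _ _ => -(M⁻¹ * D)) (M⁻¹ • C) (-B) A)).map
              (fun x : ℝ => (x : ℂ))
          - lam • 1)
        ((Matrix.fromCols (Matrix.of fun _ _ => (1 : ℝ))
            (Matrix.fromCols (Matrix.of fun _ _ => ρ) (0 : Matrix (Fin 1) (Fin k) ℝ))).map
              (fun x : ℝ => (x : ℂ)))).rank = k + 2 := by
  intro lam
  set A₀ := fromBlocks (of fun _ _ => -(M⁻¹ * D)) (M⁻¹ • C) (-B) A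
  have hone : (of fun _ _ => (1 : ℝ)).map (fun x : ℝ => (x : ℂ)) =
      (1 : Matrix (Fin 1) (Fin 1) ℂ) := by
    ext i j; simp [one_apply, Fin.fin_one_eq_zero]
  have hout : (fromCols (of fun _ _ => (1 : ℝ))
      (fromCols (of fun _ _ => ρ) (0 : Matrix (Fin 1) (Fin k) ℝ))).map (fun x : ℝ => (x : ℂ)) =
      fromCols (1 : Matrix (Fin 1) (Fin 1) ℂ)
        ((ρ : ℂ) • fromCols (1 : Matrix (Fin 1) (Fin 1) ℂ) 0) := by
    ext i (j | j | j) <;> simp [one_apply, Fin.fin_one_eq_zero]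
  have hCA : ObservableAt (C.map (fun x : ℝ => (x : ℂ))) (A.map (fun x : ℝ => (x : ℂ))) lam :=
    (rank_fromRows_sub_smul_one_eq_card_iff _ _ lam).mp ((hobs lam).trans (Fintype.card_fin k).symm)
  have hinner : ObservableAt (fromCols (1 : Matrix (Fin 1) (Fin 1) ℂ) 0)
      (A₀.map (fun x : ℝ => (x : ℂ))) lam := by
    rw [fromBlocks_map]
    convert (hCA.smul (c := (M : ℂ)⁻¹) (by simp [hM.ne'])).fromCols_one_zero_fromBlocks _ _
    ext i j; simp
  have hdet : (A₀.map (fun x : ℝ => (x : ℂ)) + (ρ : ℂ)⁻¹ • 1).det ≠ 0 := by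
    have h := Complex.ofRealHom.det_map_add_smul_one_ne_zero hnotEig
    rwa [map_inv₀, Complex.ofRealHom_eq_coe] at h
  rw [show k + 2 = Fintype.card (Fin 1 ⊕ (Fin 1 ⊕ Fin k)) by simp; omega, fromBlocks_map,
    fromCols_map, hone, hout, Matrix.map_zero _ Complex.ofReal_zero,
    Matrix.map_zero _ Complex.ofReal_zero, rank_fromRows_sub_smul_one_eq_card_iff]
  exact hinner.fromCols_one_smul_fromBlocks_zero hdet

/-- PBH observability of the bus realization. If `A ∈ ℝ^{k×k}` is
invertible, `M > 0`, `ρ > 0`, `(C, A)` is observable in the PBH sense, and `−ρ⁻¹` is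
not an eigenvalue of `[[−M⁻¹D, M⁻¹C],[−B, A]]`, then the pair `(𝒞, 𝒜)` with
`𝒜 = [[0,1,0],[0,−M⁻¹D,M⁻¹C],[0,−B,A]]` and `𝒞 = [1, ρ, 0]` is observable:
`[𝒜 − λI; 𝒞]` has rank `k+2` for every `λ ∈ ℂ`. -/
theorem pbh_observability_bus_realization {k : ℕ}
    (A : Matrix (Fin k) (Fin k) ℝ) (B : Matrix (Fin k) (Fin 1) ℝ)
    (C : Matrix (Fin 1) (Fin k) ℝ) (M D ρ : ℝ) (hM : 0 < M) (hρ : 0 < ρ)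
    (hA : IsUnit A.det)
    (hobs : ∀ lam : ℂ,
      (Matrix.fromRows (A.map (fun x : ℝ => (x : ℂ)) - lam • 1)
        (C.map (fun x : ℝ => (x : ℂ)))).rank = k)
    (hnotEig :
      ((Matrix.fromBlocks (Matrix.of fun _ _ => -(M⁻¹ * D)) (M⁻¹ • C) (-B) A)
          + ρ⁻¹ • (1 : Matrix (Fin 1 ⊕ Fin k) (Fin 1 ⊕ Fin k) ℝ)).det ≠ 0) :
    ∀ lam : ℂ,
      (Matrix.fromRows
        ((Matrix.fromBlocks (0 : Matrix (Fin 1) (Fin 1) ℝ)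
            (Matrix.fromCols (Matrix.of fun _ _ => (1 : ℝ)) (0 : Matrix (Fin 1) (Fin k) ℝ))
            (0 : Matrix (Fin 1 ⊕ Fin k) (Fin 1) ℝ)
            (Matrix.fromBlocks (Matrix.of fun _ _ => -(M⁻¹ * D)) (M⁻¹ • C) (-B) A)).map
              (fun x : ℝ => (x : ℂ))
          - lam • 1)
        ((Matrix.fromCols (Matrix.of fun _ _ => (1 : ℝ))
            (Matrix.fromCols (Matrix.of fun _ _ => ρ) (0 : Matrix (Fin 1) (Fin k) ℝ))).map
              (fun x : ℝ => (x : ℂ)))).rank = k + 2 :=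
  pbh_observability_bus_realization_general A B C M D ρ hM hobs hnotEig
end

section
/- Let R ∈ ℝ^{N×m} be the incidence matrix of a graph (each column of R has exactly one entry +1, one entry −1, and zeros elsewhere, and distinct columns correspond to distinct edges), let Γ = diag(γ_1,…,γ_m) with γ_k > 0, and let Σ = diag(σ_1,…,σ_N) with σ_i > 0. If σ_i ≥ 2(RΓRᵀ)_{ii} for every node i, then the matrix Γ^{-1} − RᵀΣ^{-1}R is positive semidefinite. -/
/-!
For `x ∈ ℝᵐ` weight Cauchy–Schwarz in each row by `|R i k|`:
`(Rx)ᵢ² ≤ (∑ₖ |Rᵢₖ| γₖ) (∑ₖ |Rᵢₖ| xₖ²/γₖ)`. For an incidence matrix `|Rᵢₖ| = Rᵢₖ²`, so the first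
factor is `(RΓRᵀ)ᵢᵢ ≤ σᵢ/2`. Summing over `i` and exchanging the sums, every column of `R`
contributes `∑ᵢ |Rᵢₖ| = 2`, which gives `∑ᵢ (Rx)ᵢ²/σᵢ ≤ ∑ₖ xₖ²/γₖ`, i.e. `xᵀ(Γ⁻¹ − RᵀΣ⁻¹R)x ≥ 0`
(a Schur test).
-/

open Matrix Finset

lemma sq_sum_mul_le_sum_abs_mul_mul_sum_abs_mul {ι : Type*} (s : Finset ι) (a x γ : ι → ℝ)
    (hγ : ∀ k ∈ s, 0 < γ k) :
    (∑ k ∈ s, a k * x k) ^ 2 ≤ (∑ k ∈ s, |a k| * γ k) * ∑ k ∈ s, |a k| * (x k ^ 2 / γ k) := by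
  refine sum_sq_le_sum_mul_sum_of_sq_le_mul _ (fun k hk => by have := hγ k hk; positivity)
    (fun k hk => by have := hγ k hk; positivity) fun k hk => le_of_eq ?_
  have := (hγ k hk).ne'
  field_simp
  rw [sq_abs]
  ring

section SchurTest

variable {n m : Type*} [Fintype n] [Fintype m] [DecidableEq n] [DecidableEq m]

lemma dotProduct_diagonal_inv_sub_transpose_mul_diagonal_inv_mul_mulVec
    (A : Matrix n m ℝ) (γ : m → ℝ) (σ : n → ℝ) (x : m → ℝ) :
    x ⬝ᵥ ((diagonal (fun k => (γ k)⁻¹) - Aᵀ * diagonal (fun i => (σ i)⁻¹) * A) *ᵥ x) =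
      ∑ k, x k ^ 2 / γ k - ∑ i, (A *ᵥ x) i ^ 2 / σ i := by
  rw [sub_mulVec, dotProduct_sub, Matrix.mul_assoc, ← mulVec_mulVec, ← mulVec_mulVec,
    dotProduct_mulVec x Aᵀ, vecMul_transpose]
  simp only [dotProduct, mulVec_diagonal]
  congr 1 <;> exact sum_congr rfl fun _ _ => by ring

theorem posSemidef_diagonal_inv_sub_transpose_mul_diagonal_inv_mul
    (A : Matrix n m ℝ) {γ : m → ℝ} {σ : n → ℝ} (hγ : ∀ k, 0 < γ k) (hσ : ∀ i, 0 < σ i)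
    (hschur : ∀ k, ∑ i, |A i k| * ((∑ l, |A i l| * γ l) / σ i) ≤ 1) :
    (diagonal (fun k => (γ k)⁻¹) - Aᵀ * diagonal (fun i => (σ i)⁻¹) * A).PosSemidef := by
  refine .of_dotProduct_mulVec_nonneg ?_ fun x => ?_
  · refine (isHermitian_diagonal _).sub ?_
    simpa using isHermitian_conjTranspose_mul_mul A (isHermitian_diagonal fun i => (σ i)⁻¹)
  rw [star_trivial, dotProduct_diagonal_inv_sub_transpose_mul_diagonal_inv_mul_mulVec,
    sub_nonneg]
  calc ∑ i, (A *ᵥ x) i ^ 2 / σ i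
      ≤ ∑ i, (∑ l, |A i l| * γ l) / σ i * ∑ k, |A i k| * (x k ^ 2 / γ k) := by
        gcongr with i
        rw [div_mul_eq_mul_div]
        exact div_le_div_of_nonneg_right
          (sq_sum_mul_le_sum_abs_mul_mul_sum_abs_mul _ _ x γ fun k _ => hγ k) (hσ i).le
    _ = ∑ k, x k ^ 2 / γ k * ∑ i, |A i k| * ((∑ l, |A i l| * γ l) / σ i) := by
        simp only [mul_sum]
        rw [sum_comm]
        exact sum_congr rfl fun _ _ => sum_congr rfl fun _ _ => by ring
    _ ≤ ∑ k, x k ^ 2 / γ k := by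
        gcongr with k
        exact mul_le_of_le_one_right (by have := hγ k; positivity) (hschur k)

end SchurTest

def IsIncidenceVector {n : Type*} (v : n → ℝ) : Prop :=
  ∃ i j, i ≠ j ∧ v i = 1 ∧ v j = -1 ∧ ∀ l, l ≠ i → l ≠ j → v l = 0

namespace IsIncidenceVector

variable {n : Type*} {v : n → ℝ}

lemma abs_eq_sq (hv : IsIncidenceVector v) (l : n) : |v l| = v l ^ 2 := by
  obtain ⟨i, j, -, hi, hj, h0⟩ := hv
  by_cases hli : l = i
  · simp [hli, hi]
  by_cases hlj : l = j
  · simp [hlj, hj]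
  simp [h0 l hli hlj]

lemma sum_abs [Fintype n] (hv : IsIncidenceVector v) : ∑ l, |v l| = 2 := by
  obtain ⟨i, j, hij, hi, hj, h0⟩ := hv
  rw [Fintype.sum_eq_add i j hij fun l ⟨hli, hlj⟩ => by simp [h0 l hli hlj], hi, hj]
  norm_num

end IsIncidenceVector

lemma mul_diagonal_mul_transpose_apply_self {n m : Type*} [Fintype m] [DecidableEq m]
    (A : Matrix n m ℝ) (γ : m → ℝ) (i : n) : (A * diagonal γ * Aᵀ) i i = ∑ k, A i k ^ 2 * γ k := by
  simp only [mul_apply, diagonal_apply, transpose_apply, mul_ite, mul_zero, sum_ite_eq',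
    mem_univ, if_true]
  exact sum_congr rfl fun _ _ => by ring

theorem incidence_weight_bound_posSemidef_general {N m : ℕ}
    (R : Matrix (Fin N) (Fin m) ℝ) (γ : Fin m → ℝ) (σ : Fin N → ℝ)
    (hγ : ∀ k, 0 < γ k) (hσ : ∀ i, 0 < σ i)
    (hinc : ∀ k : Fin m, ∃ i j : Fin N, i ≠ j ∧ R i k = 1 ∧ R j k = -1 ∧
      ∀ l : Fin N, l ≠ i → l ≠ j → R l k = 0)
    (hbound : ∀ i, 2 * (R * Matrix.diagonal γ * Rᵀ) i i ≤ σ i) :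
    (Matrix.diagonal (fun k => (γ k)⁻¹) -
        Rᵀ * Matrix.diagonal (fun i => (σ i)⁻¹) * R).PosSemidef := by
  have hrow (i : Fin N) : ∑ l, |R i l| * γ l = (R * diagonal γ * Rᵀ) i i := by
    rw [mul_diagonal_mul_transpose_apply_self]
    exact sum_congr rfl fun l _ => by rw [IsIncidenceVector.abs_eq_sq (hinc l)]
  refine posSemidef_diagonal_inv_sub_transpose_mul_diagonal_inv_mul R hγ hσ fun k => ?_
  calc ∑ i, |R i k| * ((∑ l, |R i l| * γ l) / σ i) ≤ ∑ i, |R i k| * (1 / 2) := by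
        refine sum_le_sum fun i _ => mul_le_mul_of_nonneg_left ?_ (abs_nonneg _)
        rw [hrow, div_le_iff₀ (hσ i)]
        linarith [hbound i]
    _ = 1 := by
        rw [← sum_mul, IsIncidenceVector.sum_abs (hinc k)]
        norm_num

/-- for the incidence matrix `R` of a graph, positive edge weights
`Γ = diag(γ)` and `Σ = diag(σ)` with `σᵢ ≥ 2(RΓRᵀ)ᵢᵢ`, the matrix `Γ⁻¹ − RᵀΣ⁻¹R` is
positive semidefinite. -/
theorem incidence_weight_bound_posSemidef {N m : ℕ}
    (R : Matrix (Fin N) (Fin m) ℝ) (γ : Fin m → ℝ) (σ : Fin N → ℝ)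
    (hγ : ∀ k, 0 < γ k) (hσ : ∀ i, 0 < σ i)
    (hinc : ∀ k : Fin m, ∃ i j : Fin N, i ≠ j ∧ R i k = 1 ∧ R j k = -1 ∧
      ∀ l : Fin N, l ≠ i → l ≠ j → R l k = 0)
    (hdist : ∀ k₁ k₂ : Fin m, (∀ i, R i k₁ = R i k₂) → k₁ = k₂)
    (hbound : ∀ i, 2 * (R * Matrix.diagonal γ * Rᵀ) i i ≤ σ i) :
    (Matrix.diagonal (fun k => (γ k)⁻¹) -
        Rᵀ * Matrix.diagonal (fun i => (σ i)⁻¹) * R).PosSemidef :=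
  incidence_weight_bound_posSemidef_general R γ σ hγ hσ hinc hbound
end

section
/- Let τ_α, τ_β, ρ^c, ρ^k > 0, let c : ℝ → ℝ be differentiable with (a − b)(∇c(a) − ∇c(b)) ≥ ρ^c (a − b)² for all a, b, and let k : ℝ → ℝ satisfy |k(−x) − k(−y)| ≤ ρ^k |x − y| for all x, y. Let ω̄ ∈ ℝ be constant and let (ᾱ, β̄) satisfy 0 = −∇c(ᾱ) + k(−ω̄) and β̄ = ᾱ. Suppose α, β : I → ℝ are differentiable and ω : I → ℝ is a given input with τ_α α̇(t) = −∇c(α(t)) + k(−ω(t)) and τ_β β̇(t) = −β(t) + α(t) on an interval I. Then the storage function Z(t) := (τ_α/ρ^c)(α(t) − ᾱ)² + τ_β (β(t) − β̄)² satisfies, at every t ∈ I, dZ/dt ≤ (ρ^k/ρ^c)² (ω(t) − ω̄)² − (β(t) − β̄)². Hence the second-order generation dynamics with input −ω and output u = β has incremental L₂-gain not greater than ρ^k/ρ^c. -/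
/-!
The system is a cascade of a gradient flow driven by `k(-ω)` and a first-order lag filter
`τ_β β̇ = α - β`. Strong monotonicity of `∇c` and the Lipschitz bound on `k` make the first
stage dissipative with supply `(ρᵏ/ρᶜ)² |ω - ω̄|² - |α - ᾱ|²`, the filter is dissipative with
supply `|α - ᾱ|² - |β - β̄|²`, and the sum of the two storages telescopes the middle term.
-/

theorem HasDerivAt.const_mul_sub_sq {x : ℝ → ℝ} {x' t : ℝ} (a x₀ : ℝ) (hx : HasDerivAt x x' t) :
    HasDerivAt (fun s => a * (x s - x₀) ^ 2) (2 * a * (x t - x₀) * x') t := by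
  refine (((hx.sub_const x₀).fun_pow 2).const_mul a).congr_deriv ?_
  norm_num
  ring

theorem strongly_monotone_flow_dissipation {τ ρ L : ℝ} (hτ : τ ≠ 0) (hρ : 0 < ρ)
    {g x v : ℝ → ℝ} {x₀ v₀ w t : ℝ} (hx₀ : g x₀ = v₀)
    (hg : ρ * (x t - x₀) ^ 2 ≤ (x t - x₀) * (g (x t) - g x₀))
    (hv : |v t - v₀| ≤ L * |w|)
    (hx : HasDerivAt x ((-g (x t) + v t) / τ) t) :
    ∃ Z', HasDerivAt (fun s => τ / ρ * (x s - x₀) ^ 2) Z' t ∧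
      Z' ≤ (L / ρ) ^ 2 * w ^ 2 - (x t - x₀) ^ 2 := by
  refine ⟨_, hx.const_mul_sub_sq (τ / ρ) x₀, ?_⟩
  set A := x t - x₀
  have hsupply : A * (v t - v₀) ≤ L * (|A| * |w|) := by
    calc A * (v t - v₀) ≤ |A| * |v t - v₀| := by rw [← abs_mul]; exact le_abs_self _
      _ ≤ |A| * (L * |w|) := mul_le_mul_of_nonneg_left hv (abs_nonneg A)
      _ = L * (|A| * |w|) := by ring
  have hyoung : 2 * (L / ρ * |w|) * |A| ≤ (L / ρ * |w|) ^ 2 + |A| ^ 2 := two_mul_le_add_sq _ _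
  rw [mul_pow, sq_abs, sq_abs] at hyoung
  calc 2 * (τ / ρ) * A * ((-g (x t) + v t) / τ)
        = 2 / ρ * (A * (v t - v₀) - A * (g (x t) - g x₀)) := by
          rw [← hx₀]; field_simp; ring
    _ ≤ 2 / ρ * (L * (|A| * |w|) - ρ * A ^ 2) := by gcongr
    _ = 2 * (L / ρ * |w|) * |A| - 2 * A ^ 2 := by field_simp
    _ ≤ (L / ρ) ^ 2 * w ^ 2 - A ^ 2 := by linarith

theorem first_order_lag_dissipation {τ : ℝ} (hτ : τ ≠ 0) {y u : ℝ → ℝ} {y₀ t : ℝ}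
    (hy : HasDerivAt y ((-y t + u t) / τ) t) :
    ∃ Z', HasDerivAt (fun s => τ * (y s - y₀) ^ 2) Z' t ∧
      Z' ≤ (u t - y₀) ^ 2 - (y t - y₀) ^ 2 := by
  refine ⟨_, hy.const_mul_sub_sq τ y₀, ?_⟩
  have hexpand : 2 * τ * (y t - y₀) * ((-y t + u t) / τ)
      = (u t - y₀) ^ 2 - (y t - y₀) ^ 2 - (u t - y t) ^ 2 := by
    field_simp; ring
  rw [hexpand]
  linarith [sq_nonneg (u t - y t)]

theorem second_order_generation_incremental_L2_gain_general
    (τa τb ρc ρk : ℝ) (hτa : 0 < τa) (hτb : 0 < τb) (hρc : 0 < ρc)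
    (c : ℝ → ℝ)
    (hstrong : ∀ a b : ℝ, ρc * (a - b) ^ 2 ≤ (a - b) * (deriv c a - deriv c b))
    (k : ℝ → ℝ) (hk : ∀ x y : ℝ, |k (-x) - k (-y)| ≤ ρk * |x - y|)
    (ω' α' β' : ℝ) (heq1 : 0 = -(deriv c α') + k (-ω')) (heq2 : β' = α')
    (I : Set ℝ) (α β ω : ℝ → ℝ)
    (hα : ∀ t ∈ I, HasDerivAt α ((-(deriv c (α t)) + k (-(ω t))) / τa) t)
    (hβ : ∀ t ∈ I, HasDerivAt β ((-(β t) + α t) / τb) t) :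
    ∀ t ∈ I, ∃ Z' : ℝ,
      HasDerivAt (fun s => (τa / ρc) * (α s - α') ^ 2 + τb * (β s - β') ^ 2) Z' t ∧
        Z' ≤ (ρk / ρc) ^ 2 * (ω t - ω') ^ 2 - (β t - β') ^ 2 := by
  intro t ht
  obtain ⟨Zα, hZα, hZα_le⟩ := strongly_monotone_flow_dissipation (v := fun s => k (-ω s))
    hτa.ne' hρc (by linarith) (hstrong (α t) α') (hk (ω t) ω') (hα t ht)
  obtain ⟨Zβ, hZβ, hZβ_le⟩ := first_order_lag_dissipation (y₀ := β') hτb.ne' (hβ t ht)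
  subst heq2
  exact ⟨Zα + Zβ, hZα.add hZβ, by linarith⟩

/-- the second-order generation dynamics
`τ_α α̇ = −∇c(α) + k(−ω)`, `τ_β β̇ = −β + α`, `u = β`, with `c` strongly convex with
parameter `ρᶜ` and `k` Lipschitz with constant `ρᵏ`, admits the storage function
`Z = (τ_α/ρᶜ)(α − ᾱ)² + τ_β(β − β̄)²` satisfying
`dZ/dt ≤ (ρᵏ/ρᶜ)²(ω − ω̄)² − (β − β̄)²`; hence its incremental L₂-gain is at most
`ρᵏ/ρᶜ`. -/
theorem second_order_generation_incremental_L2_gain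
    (τa τb ρc ρk : ℝ) (hτa : 0 < τa) (hτb : 0 < τb) (hρc : 0 < ρc) (hρk : 0 < ρk)
    (c : ℝ → ℝ) (hc : Differentiable ℝ c)
    (hstrong : ∀ a b : ℝ, ρc * (a - b) ^ 2 ≤ (a - b) * (deriv c a - deriv c b))
    (k : ℝ → ℝ) (hk : ∀ x y : ℝ, |k (-x) - k (-y)| ≤ ρk * |x - y|)
    (ω' α' β' : ℝ) (heq1 : 0 = -(deriv c α') + k (-ω')) (heq2 : β' = α')
    (I : Set ℝ) (α β ω : ℝ → ℝ)
    (hα : ∀ t ∈ I, HasDerivAt α ((-(deriv c (α t)) + k (-(ω t))) / τa) t)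
    (hβ : ∀ t ∈ I, HasDerivAt β ((-(β t) + α t) / τb) t) :
    ∀ t ∈ I, ∃ Z' : ℝ,
      HasDerivAt (fun s => (τa / ρc) * (α s - α') ^ 2 + τb * (β s - β') ^ 2) Z' t ∧
        Z' ≤ (ρk / ρc) ^ 2 * (ω t - ω') ^ 2 - (β t - β') ^ 2 :=
  second_order_generation_incremental_L2_gain_general τa τb ρc ρk hτa hτb hρc c hstrong k hk ω' α'
    β' heq1 heq2 I α β ω hα hβ
end

section
/- Let τ > 0, let h : ℝ → ℝ be strictly increasing and Lipschitz with constant ρ^h > 0, let v̄ ∈ ℝ be constant and β̄ = v̄. Suppose β : I → ℝ is differentiable and v : I → ℝ is a given input with τ β̇(t) = −β(t) + v(t) on an interval I. Then the Bregman-type storage function S(t) := τ·∫_{β̄}^{β(t)} (h(s) − h(β̄)) ds is nonnegative, vanishes exactly when β(t) = β̄, and satisfies at every t ∈ I: dS/dt ≤ −(1/ρ^h)·(h(β(t)) − h(β̄))² + (h(β(t)) − h(β̄))·(v(t) − v̄). Hence the first-order block with output u = h(β) is output strictly incrementally passive with coefficient (ρ^h)^{-1}. -/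
/-!
The storage `τ ∫_{β̄}^{β} (h s - h β̄) ds` is a Bregman-type integral of the increasing map `h`:
positive off `β̄` because the integrand has the sign of `s - β̄`. By the chain rule its time
derivative is `(h β - h β̄)(v - β)`; since `β̄ = v̄` this equals
`(h β - h β̄)(v - v̄) - (h β - h β̄)(β - β̄)`, and for a monotone `ρ`-Lipschitz `h` the last
product dominates `(h β - h β̄)² / ρ` (co-coercivity).
-/

theorem StrictMono.integral_sub_pos {h : ℝ → ℝ} (hmono : StrictMono h) {c x : ℝ} (hx : x ≠ c) :
    0 < ∫ s in c..x, (h s - h c) := by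
  rcases hx.lt_or_gt with hlt | hgt
  · have hflip : (∫ s in c..x, (h s - h c)) = ∫ s in x..c, (h c - h s) := by
      rw [intervalIntegral.integral_symm, ← intervalIntegral.integral_neg]
      simp only [neg_sub]
    rw [hflip]
    exact intervalIntegral.intervalIntegral_pos_of_pos_on
      (intervalIntegrable_const.sub hmono.monotone.intervalIntegrable)
      (fun s hs => sub_pos.2 (hmono hs.2)) hlt
  · exact intervalIntegral.intervalIntegral_pos_of_pos_on
      (hmono.monotone.intervalIntegrable.sub intervalIntegrable_const)
      (fun s hs => sub_pos.2 (hmono hs.1)) hgt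

theorem StrictMono.integral_sub_nonneg {h : ℝ → ℝ} (hmono : StrictMono h) (c x : ℝ) :
    0 ≤ ∫ s in c..x, (h s - h c) := by
  rcases eq_or_ne x c with rfl | hx
  · simp
  · exact (hmono.integral_sub_pos hx).le

theorem StrictMono.integral_sub_eq_zero_iff {h : ℝ → ℝ} (hmono : StrictMono h) {c x : ℝ} :
    (∫ s in c..x, (h s - h c)) = 0 ↔ x = c := by
  refine ⟨fun hzero => ?_, fun hx => by simp [hx]⟩
  by_contra hx
  exact (hmono.integral_sub_pos hx).ne' hzero

theorem Monotone.one_div_mul_sq_sub_le_of_abs_sub_le {h : ℝ → ℝ} (hmono : Monotone h) {ρ : ℝ}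
    (hρ : 0 < ρ) (hlip : ∀ x y : ℝ, |h x - h y| ≤ ρ * |x - y|) (x y : ℝ) :
    1 / ρ * (h x - h y) ^ 2 ≤ (h x - h y) * (x - y) := by
  have hprod : 0 ≤ (h x - h y) * (x - y) := (hmono.monovary monotone_id).sub_mul_sub_nonneg y x
  have hsq : (h x - h y) ^ 2 ≤ ρ * ((h x - h y) * (x - y)) :=
    calc (h x - h y) ^ 2 = |h x - h y| * |h x - h y| := by rw [abs_mul_abs_self, sq]
      _ ≤ |h x - h y| * (ρ * |x - y|) := mul_le_mul_of_nonneg_left (hlip x y) (abs_nonneg _)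
      _ = ρ * |(h x - h y) * (x - y)| := by rw [abs_mul]; ring
      _ = ρ * ((h x - h y) * (x - y)) := by rw [abs_of_nonneg hprod]
  rw [one_div_mul_eq_div, div_le_iff₀ hρ]
  linarith

/-- for the first-order block `τβ̇ = −β + v` with strictly increasing,
`ρʰ`-Lipschitz output map `u = h(β)`, the Bregman-type storage
`S = τ·∫_{β̄}^{β}(h(s) − h(β̄))ds` is nonnegative, vanishes exactly at `β = β̄`, and
satisfies `dS/dt ≤ −(1/ρʰ)(h(β) − h(β̄))² + (h(β) − h(β̄))(v − v̄)`; hence the block is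
output strictly incrementally passive with coefficient `(ρʰ)⁻¹`. -/
theorem first_order_block_output_strictly_incrementally_passive
    (τ ρh : ℝ) (hτ : 0 < τ) (hρh : 0 < ρh)
    (h : ℝ → ℝ) (hmono : StrictMono h) (hlip : ∀ x y : ℝ, |h x - h y| ≤ ρh * |x - y|)
    (v' β' : ℝ) (hβ' : β' = v')
    (I : Set ℝ) (β v : ℝ → ℝ)
    (hβ : ∀ t ∈ I, HasDerivAt β ((-(β t) + v t) / τ) t) :
    (∀ t : ℝ, 0 ≤ τ * ∫ s in β'..(β t), (h s - h β')) ∧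
      (∀ t : ℝ, (τ * ∫ s in β'..(β t), (h s - h β')) = 0 ↔ β t = β') ∧
      (∀ t ∈ I, ∃ S' : ℝ,
        HasDerivAt (fun r => τ * ∫ s in β'..(β r), (h s - h β')) S' t ∧
          S' ≤ -(1 / ρh) * (h (β t) - h β') ^ 2 + (h (β t) - h β') * (v t - v')) := by
  have hcont : Continuous h :=
    (LipschitzWith.of_dist_le' (by simpa only [Real.dist_eq] using hlip)).continuous
  refine ⟨fun t => mul_nonneg hτ.le (hmono.integral_sub_nonneg _ _), fun t => ?_, fun t ht => ?_⟩
  · rw [mul_eq_zero, or_iff_right hτ.ne', hmono.integral_sub_eq_zero_iff]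
  · have hintegrand : Continuous fun s => h s - h β' := hcont.sub continuous_const
    have hstorage := hintegrand.integral_hasStrictDerivAt β' (β t)
    refine ⟨_, (hstorage.hasDerivAt.comp t (hβ t ht)).const_mul τ, ?_⟩
    have hcoercive := hmono.monotone.one_div_mul_sq_sub_le_of_abs_sub_le hρh hlip (β t) β'
    have hrate : τ * ((h (β t) - h β') * ((-(β t) + v t) / τ))
        = (h (β t) - h β') * (v t - v') - (h (β t) - h β') * (β t - β') := by
      subst hβ'
      field_simp
      ring
    linarith
end

section
/- Let R ∈ ℝ^{(n+1)×n} satisfy 𝟙ᵀR = 0 and have full column rank n (R is the incidence matrix of a tree on n+1 nodes), let Γ = diag(γ_1,…,γ_n) with γ_k > 0, and let c ∈ ℝ^{n+1} satisfy 𝟙ᵀc = 0. If ‖Γ^{-1}(RᵀR)^{-1}Rᵀ c‖_∞ < 1, then there exists θ ∈ ℝ^{n+1} such that Rᵀθ ∈ (−π/2, π/2)^n and R Γ sin(Rᵀθ) = c. -/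
open Matrix

section aux

variable {n : ℕ} (R : Matrix (Fin (n + 1)) (Fin n) ℝ)

lemma aux_ker_inj (hrank : R.rank = n) : LinearMap.ker R.mulVecLin = ⊥ := by
  have h := LinearMap.finrank_range_add_finrank_ker R.mulVecLin
  rw [show Module.finrank ℝ (Fin n → ℝ) = n by simp] at h
  have : Module.finrank ℝ (LinearMap.range R.mulVecLin) = n := hrank
  have hk : Module.finrank ℝ (LinearMap.ker R.mulVecLin) = 0 := by omega
  exact Submodule.finrank_eq_zero.mp hk

lemma aux_det_ne (hrank : R.rank = n) : (Rᵀ * R).det ≠ 0 := by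
  intro h
  obtain ⟨v, hvne, hv⟩ := (Matrix.exists_mulVec_eq_zero_iff).mpr h
  have : v ∈ LinearMap.ker (Rᵀ * R).mulVecLin := hv
  rw [Matrix.ker_mulVecLin_transpose_mul_self, aux_ker_inj R hrank] at this
  exact hvne (by simpa using this)

end aux

/-- feasibility of the synchronous-motion (power-flow) equations on a
tree: if `R` is the incidence matrix of a tree on `n+1` nodes (zero column sums, full
column rank), `Γ = diag(γ) > 0`, `𝟙ᵀc = 0` and `‖Γ⁻¹(RᵀR)⁻¹Rᵀc‖_∞ < 1`, then there is
`θ` with `Rᵀθ ∈ (−π/2, π/2)ⁿ` and `RΓ sin(Rᵀθ) = c`. -/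
theorem tree_power_flow_feasibility {n : ℕ}
    (R : Matrix (Fin (n + 1)) (Fin n) ℝ) (γ : Fin n → ℝ) (c : Fin (n + 1) → ℝ)
    (hones : ∀ k : Fin n, ∑ i, R i k = 0)
    (hrank : R.rank = n)
    (hγ : ∀ k, 0 < γ k)
    (hc : ∑ i, c i = 0)
    (hfeas : ∀ k : Fin n,
      |((Matrix.diagonal γ)⁻¹ *ᵥ ((Rᵀ * R)⁻¹ *ᵥ (Rᵀ *ᵥ c))) k| < 1) :
    ∃ θ : Fin (n + 1) → ℝ,
      (∀ k : Fin n, (Rᵀ *ᵥ θ) k ∈ Set.Ioo (-(Real.pi / 2)) (Real.pi / 2)) ∧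
        R *ᵥ (fun k => γ k * Real.sin ((Rᵀ *ᵥ θ) k)) = c := by
  classical
  set G := Rᵀ * R with hG
  have hdet : G.det ≠ 0 := aux_det_ne R hrank
  have hGinv : G * G⁻¹ = 1 := Matrix.mul_nonsing_inv G (isUnit_iff_ne_zero.mpr hdet)
  set w : Fin n → ℝ := G⁻¹ *ᵥ (Rᵀ *ᵥ c) with hw
  set x : Fin n → ℝ := (Matrix.diagonal γ)⁻¹ *ᵥ w with hx
  -- γ k * x k = w k
  have hdiagdet : (Matrix.diagonal γ).det ≠ 0 := by
    rw [Matrix.det_diagonal]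
    exact Finset.prod_ne_zero_iff.mpr fun k _ => (hγ k).ne'
  have hγx : ∀ k, γ k * x k = w k := by
    intro k
    have := Matrix.mul_nonsing_inv (Matrix.diagonal γ) (isUnit_iff_ne_zero.mpr hdiagdet)
    have h2 : Matrix.diagonal γ *ᵥ x = w := by
      rw [hx, Matrix.mulVec_mulVec, this, Matrix.one_mulVec]
    have := congrFun h2 k
    simpa [Matrix.mulVec_diagonal] using this
  -- the angles
  set η : Fin n → ℝ := fun k => Real.arcsin (x k) with hη
  -- θ
  have hRθ : Rᵀ *ᵥ (R *ᵥ (G⁻¹ *ᵥ η)) = η := by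
    rw [Matrix.mulVec_mulVec, Matrix.mulVec_mulVec, ← hG, hGinv,
      Matrix.one_mulVec]
  refine ⟨R *ᵥ (G⁻¹ *ᵥ η), ?_, ?_⟩
  · intro k
    rw [hRθ]
    have h1 : |x k| < 1 := hfeas k
    rw [abs_lt] at h1
    exact ⟨Real.neg_pi_div_two_lt_arcsin.mpr h1.1, Real.arcsin_lt_pi_div_two.mpr h1.2⟩
  · rw [hRθ]
    have hsin : (fun k => γ k * Real.sin (η k)) = w := by
      funext k
      have h1 : |x k| < 1 := hfeas k
      rw [abs_lt] at h1
      rw [hη]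
      rw [Real.sin_arcsin h1.1.le h1.2.le]
      exact hγx k
    rw [hsin]
    -- now show R *ᵥ w = c
    -- first: Rᵀ *ᵥ (c - R *ᵥ w) = 0
    set d : Fin (n + 1) → ℝ := c - R *ᵥ w with hd
    have hdk : Rᵀ *ᵥ d = 0 := by
      rw [hd, Matrix.mulVec_sub, hw, Matrix.mulVec_mulVec, Matrix.mulVec_mulVec,
        ← hG, hGinv, Matrix.one_mulVec, sub_self]
    -- kernel of Rᵀ is span of 1
    have hone : Rᵀ *ᵥ (fun _ => (1:ℝ)) = 0 := by
      funext k
      simpa [Matrix.mulVec, dotProduct, Matrix.transpose_apply] using hones k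
    have honene : (fun _ => (1:ℝ) : Fin (n+1) → ℝ) ≠ 0 := by
      intro h
      have := congrFun h 0
      simp at this
    have hspan_le : Submodule.span ℝ {(fun _ => (1:ℝ) : Fin (n+1) → ℝ)} ≤
        LinearMap.ker Rᵀ.mulVecLin := by
      rw [Submodule.span_singleton_le_iff_mem]
      exact hone
    have hkerfin : Module.finrank ℝ (LinearMap.ker Rᵀ.mulVecLin) = 1 := by
      have h := LinearMap.finrank_range_add_finrank_ker Rᵀ.mulVecLin
      rw [show Module.finrank ℝ (Fin (n+1) → ℝ) = n + 1 by simp] at h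
      have hr : Module.finrank ℝ (LinearMap.range Rᵀ.mulVecLin) = n := by
        have := Matrix.rank_transpose R
        rw [hrank] at this
        exact this
      omega
    have hker_eq : Submodule.span ℝ {(fun _ => (1:ℝ) : Fin (n+1) → ℝ)} =
        LinearMap.ker Rᵀ.mulVecLin := by
      apply Submodule.eq_of_le_of_finrank_le hspan_le
      rw [hkerfin, finrank_span_singleton honene]
    have hdmem : d ∈ Submodule.span ℝ {(fun _ => (1:ℝ) : Fin (n+1) → ℝ)} := by
      rw [hker_eq]
      exact hdk
    obtain ⟨t, ht⟩ := Submodule.mem_span_singleton.mp hdmem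
    -- sum of d is zero
    have hsumRw : ∑ i, (R *ᵥ w) i = 0 := by
      simp only [Matrix.mulVec, dotProduct]
      rw [Finset.sum_comm]
      simp_rw [← Finset.sum_mul]
      simp [hones]
    have hsumd : ∑ i, d i = 0 := by
      simp [hd, Finset.sum_sub_distrib, hc, hsumRw]
    rw [← ht] at hsumd
    simp [Finset.sum_const] at hsumd
    -- t * (n+1) = 0 so t = 0
    have ht0 : t = 0 := by
      rcases hsumd with h | h
      · exact absurd h (Nat.cast_add_one_ne_zero n)
      · exact h
    rw [ht0, zero_smul] at ht
    have hd0 : d = 0 := ht.symm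
    rw [hd] at hd0
    exact (sub_eq_zero.mp hd0).symm
end
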